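/- arXiv:1106.2650 — 2 statements merged into one kernel-verified Lean document; each statement's English description precedes it below -/
import Mathlib

section
/- The action profile (α₁, α₂) = (1,0) is a pure Nash equilibrium of the channel selection game if and only if g_{1,1}^{(1)}(1 + g_{1,2}^{(2)}) ≥ g_{1,1}^{(2)} and g_{2,2}^{(2)}(1 + g_{2,1}^{(1)}) ≥ g_{2,2}^{(1)}. -/
/-! Each player's only possible deviation is to switch channel. Since `logb 2` is strictly
monotone, switching is unprofitable exactly when the SINR on the chosen channel is at least the
SINR on the other one, and clearing the denominator `1 + g` of the latter gives the stated
inequality. -/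

open Real Set

/-- Utility of a player with direct gains `gk1 gk2`, cross gains `gi1 gi2`,
own action `a`, opponent action `b`. -/
noncomputable def u (gk1 gk2 gi1 gi2 a b : ℝ) : ℝ :=
  Real.logb 2 (1 + a * gk1 / (1 + b * gi1)) +
  Real.logb 2 (1 + (1 - a) * gk2 / (1 + (1 - b) * gi2))

theorem Real.logb_one_add_div_le_logb_one_add_iff {b x y d : ℝ} (hb : 1 < b)
    (hx : 0 ≤ x) (hy : 0 ≤ y) (hd : 0 ≤ d) :
    logb b (1 + x / (1 + d)) ≤ logb b (1 + y) ↔ x ≤ y * (1 + d) := by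
  have hd' : 0 < 1 + d := by linarith
  rw [logb_le_logb hb (by positivity) (by positivity), add_le_add_iff_left, div_le_iff₀ hd']

section PureActions

variable (gk1 gk2 gi1 gi2 : ℝ)

theorem u_one_zero : u gk1 gk2 gi1 gi2 1 0 = logb 2 (1 + gk1) := by simp [u]

theorem u_zero_zero : u gk1 gk2 gi1 gi2 0 0 = logb 2 (1 + gk2 / (1 + gi2)) := by simp [u]

theorem u_zero_one : u gk1 gk2 gi1 gi2 0 1 = logb 2 (1 + gk2) := by simp [u]

theorem u_one_one : u gk1 gk2 gi1 gi2 1 1 = logb 2 (1 + gk1 / (1 + gi1)) := by simp [u]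

variable {gk1 gk2 gi1 gi2}

theorem u_zero_zero_le_u_one_zero_iff (hk1 : 0 ≤ gk1) (hk2 : 0 ≤ gk2) (hi2 : 0 ≤ gi2) :
    u gk1 gk2 gi1 gi2 0 0 ≤ u gk1 gk2 gi1 gi2 1 0 ↔ gk2 ≤ gk1 * (1 + gi2) := by
  rw [u_zero_zero, u_one_zero, logb_one_add_div_le_logb_one_add_iff one_lt_two hk2 hk1 hi2]

theorem u_one_one_le_u_zero_one_iff (hk1 : 0 ≤ gk1) (hk2 : 0 ≤ gk2) (hi1 : 0 ≤ gi1) :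
    u gk1 gk2 gi1 gi2 1 1 ≤ u gk1 gk2 gi1 gi2 0 1 ↔ gk1 ≤ gk2 * (1 + gi1) := by
  rw [u_one_one, u_zero_one, logb_one_add_div_le_logb_one_add_iff one_lt_two hk1 hk2 hi1]

end PureActions

theorem cs_NE_one_zero_iff_general
    (g111 g112 g121 g122 g211 g212 g221 g222 : ℝ)
    (h111 : 0 < g111) (h112 : 0 < g112) (h122 : 0 < g122)
    (h211 : 0 < g211) (h221 : 0 < g221) (h222 : 0 < g222) :
    ((∀ a1' ∈ ({0, 1} : Set ℝ),
        u g111 g112 g121 g122 a1' 0 ≤ u g111 g112 g121 g122 1 0) ∧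
     (∀ a2' ∈ ({0, 1} : Set ℝ),
        u g221 g222 g211 g212 a2' 1 ≤ u g221 g222 g211 g212 0 1))
    ↔ (g112 ≤ g111 * (1 + g122) ∧ g221 ≤ g222 * (1 + g211)) := by
  simp only [forall_mem_insert, mem_singleton_iff, forall_eq, le_refl, and_true, true_and]
  rw [u_zero_zero_le_u_one_zero_iff h111.le h112.le h122.le,
    u_one_one_le_u_zero_one_iff h221.le h222.le h211.le]

/-- `(1,0)` is a pure NE of the CS game iff
`g_{1,1}^{(1)}(1+g_{1,2}^{(2)}) ≥ g_{1,1}^{(2)}` and `g_{2,2}^{(2)}(1+g_{2,1}^{(1)}) ≥ g_{2,2}^{(1)}`. -/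
theorem cs_NE_one_zero_iff
    (g111 g112 g121 g122 g211 g212 g221 g222 : ℝ)
    (h111 : 0 < g111) (h112 : 0 < g112) (h121 : 0 < g121) (h122 : 0 < g122)
    (h211 : 0 < g211) (h212 : 0 < g212) (h221 : 0 < g221) (h222 : 0 < g222) :
    ((∀ a1' ∈ ({0, 1} : Set ℝ),
        u g111 g112 g121 g122 a1' 0 ≤ u g111 g112 g121 g122 1 0) ∧
     (∀ a2' ∈ ({0, 1} : Set ℝ),
        u g221 g222 g211 g212 a2' 1 ≤ u g221 g222 g211 g212 0 1))
    ↔ (g112 ≤ g111 * (1 + g122) ∧ g221 ≤ g222 * (1 + g211)) :=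
  cs_NE_one_zero_iff_general g111 g112 g121 g122 g211 g212 g221 g222 h111 h112 h122 h211 h221 h222
end

section
/- Let clamp(x) = min(1, max(0, x)), let c₁, c₂ < 0 with c₁c₂ > 1, d₁, d₂ ∈ ℝ, and suppose the intersection point (α₁†, α₂†) of the lines α₁ = c₁α₂ + d₁ and α₂ = c₂α₁ + d₂ satisfies 0 < α₁† < 1 and 0 < α₂† < 1. Then the system α₁ = clamp(c₁α₂ + d₁), α₂ = clamp(c₂α₁ + d₂) has at least three solutions in [0,1]²: the interior point (α₁†, α₂†) and two additional solutions in which at least one coordinate lies in {0,1}. -/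
/-!
Let `f α₂ = clamp01 (c₁ α₂ + d₁)` and `g α₁ = clamp01 (c₂ α₁ + d₂)` be the two best responses.
Besides the crossing point `(α₁†, α₂†)` of the lines, there is an equilibrium to its lower right
(and, exchanging the players, one to its upper left): player 1 plays `u = f 0 = clamp01 d₁` and
player 2 answers `g u`. If `d₁ ≤ 1`, then `g u = 0` because `c₂ d₁ + d₂ = α₂† (1 - c₁ c₂) < 0`;
if `d₁ ≥ 1`, then `u = 1` and `f (g 1) = 1` because
`c₁ (c₂ + d₂) + d₁ = 1 + (c₁ c₂ - 1) (1 - α₁†) ≥ 1`.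
In either case some coordinate is clamped, and `α₁† < u` separates the point from the other two.
-/

noncomputable def clamp01 (x : ℝ) : ℝ := min 1 (max 0 x)

section Clamp

variable {x y : ℝ}

lemma clamp01_mem (x : ℝ) : clamp01 x ∈ Set.Icc (0 : ℝ) 1 :=
  ⟨le_min zero_le_one (le_max_left 0 x), min_le_left _ _⟩

lemma clamp01_of_nonpos (hx : x ≤ 0) : clamp01 x = 0 := by
  rw [clamp01, max_eq_left hx, min_eq_right zero_le_one]

lemma clamp01_of_one_le (hx : 1 ≤ x) : clamp01 x = 1 :=
  min_eq_left (hx.trans (le_max_right 0 x))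

lemma clamp01_of_mem_Icc (hx : x ∈ Set.Icc (0 : ℝ) 1) : clamp01 x = x := by
  rw [clamp01, max_eq_right hx.1, min_eq_right hx.2]

lemma le_clamp01 (hx : x ≤ 1) : x ≤ clamp01 x :=
  le_min hx (le_max_right 0 x)

lemma clamp01_le (hx : 0 ≤ x) : clamp01 x ≤ x :=
  (min_le_right _ _).trans (max_eq_right hx).le

lemma clamp01_lt (hxy : x < y) (hy : 0 < y) : clamp01 x < y :=
  (min_le_right _ _).trans_lt (max_lt hy hxy)

lemma lt_clamp01 (hyx : y < x) (hy : y < 1) : y < clamp01 x :=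
  lt_min hy (lt_max_of_lt_right hyx)

end Clamp

def IsClampedEquilibrium (c1 d1 c2 d2 : ℝ) (p : ℝ × ℝ) : Prop :=
  p.1 = clamp01 (c1 * p.2 + d1) ∧ p.2 = clamp01 (c2 * p.1 + d2)

namespace IsClampedEquilibrium

variable {c1 d1 c2 d2 : ℝ} {p : ℝ × ℝ}

lemma swap (hp : IsClampedEquilibrium c1 d1 c2 d2 p) :
    IsClampedEquilibrium c2 d2 c1 d1 p.swap :=
  ⟨hp.2, hp.1⟩

lemma mem_unitSquare (hp : IsClampedEquilibrium c1 d1 c2 d2 p) :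
    p ∈ Set.Icc (0 : ℝ) 1 ×ˢ Set.Icc (0 : ℝ) 1 :=
  ⟨hp.1 ▸ clamp01_mem _, hp.2 ▸ clamp01_mem _⟩

end IsClampedEquilibrium

section Lines

variable {c1 c2 d1 d2 a1 a2 : ℝ}

lemma isClampedEquilibrium_of_mem_Icc (hl1 : a1 = c1 * a2 + d1) (hl2 : a2 = c2 * a1 + d2)
    (ha1 : a1 ∈ Set.Icc (0 : ℝ) 1) (ha2 : a2 ∈ Set.Icc (0 : ℝ) 1) :
    IsClampedEquilibrium c1 d1 c2 d2 (a1, a2) :=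
  ⟨by rw [← hl1, clamp01_of_mem_Icc ha1], by rw [← hl2, clamp01_of_mem_Icc ha2]⟩

lemma exists_isClampedEquilibrium_fst_gt (hc1 : c1 < 0) (hc2 : c2 < 0) (hc : 1 < c1 * c2)
    (hl1 : a1 = c1 * a2 + d1) (hl2 : a2 = c2 * a1 + d2) (ha1 : a1 < 1) (ha2 : 0 < a2) :
    ∃ p, IsClampedEquilibrium c1 d1 c2 d2 p ∧ a1 < p.1 ∧ p.2 < a2 ∧ (p.1 = 1 ∨ p.2 = 0) := by
  set u := clamp01 d1
  set v := clamp01 (c2 * u + d2) with hv_def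
  have hu : a1 < u := lt_clamp01 (by nlinarith) ha1
  suffices hfix : u = clamp01 (c1 * v + d1) ∧ (u = 1 ∨ v = 0) from
    ⟨(u, v), ⟨hfix.1, rfl⟩, hu, clamp01_lt (by nlinarith) ha2, hfix.2⟩
  rcases le_total d1 1 with hd1 | hd1
  · have hdiag : c2 * d1 + d2 = a2 * (1 - c1 * c2) := by linear_combination -hl2 - c2 * hl1
    have hv : v = 0 := clamp01_of_nonpos (by nlinarith [le_clamp01 hd1])
    rw [hv, mul_zero, zero_add]
    exact ⟨rfl, Or.inr rfl⟩
  · have hu1 : u = 1 := clamp01_of_one_le hd1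
    refine ⟨hu1.trans (clamp01_of_one_le ?_).symm, Or.inl hu1⟩
    rw [hv_def, hu1, mul_one]
    rcases le_total (c2 + d2) 0 with hw | hw
    · rw [clamp01_of_nonpos hw]
      linarith
    · have hcorner : c1 * (c2 + d2) + d1 = 1 + (c1 * c2 - 1) * (1 - a1) := by
        linear_combination -c1 * hl2 - hl1
      nlinarith [clamp01_le hw]

end Lines

/-- When the product of (negative) best-response slopes exceeds 1 and the
intersection of the lines lies in the open unit square, the clamped
best-response system has at least three solutions. -/
theorem clamp_affine_three_fixed_points
    (c1 c2 d1 d2 : ℝ) (hc1 : c1 < 0) (hc2 : c2 < 0) (h : 1 < c1 * c2)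
    (a1d a2d : ℝ)
    (ha2d : a2d = (d1 * c2 + d2) / (1 - c1 * c2))
    (ha1d : a1d = c1 * a2d + d1)
    (h1 : 0 < a1d) (h1' : a1d < 1) (h2 : 0 < a2d) (h2' : a2d < 1) :
    (a1d = clamp01 (c1 * a2d + d1) ∧ a2d = clamp01 (c2 * a1d + d2)) ∧
    ∃ p q : ℝ × ℝ,
      p ≠ q ∧ p ≠ (a1d, a2d) ∧ q ≠ (a1d, a2d) ∧
      p ∈ Set.Icc (0 : ℝ) 1 ×ˢ Set.Icc (0 : ℝ) 1 ∧
      q ∈ Set.Icc (0 : ℝ) 1 ×ˢ Set.Icc (0 : ℝ) 1 ∧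
      p.1 = clamp01 (c1 * p.2 + d1) ∧ p.2 = clamp01 (c2 * p.1 + d2) ∧
      q.1 = clamp01 (c1 * q.2 + d1) ∧ q.2 = clamp01 (c2 * q.1 + d2) ∧
      (p.1 ∈ ({0, 1} : Set ℝ) ∨ p.2 ∈ ({0, 1} : Set ℝ)) ∧
      (q.1 ∈ ({0, 1} : Set ℝ) ∨ q.2 ∈ ({0, 1} : Set ℝ)) := by
  have hl2 : a2d = c2 * a1d + d2 := by
    rw [eq_div_iff (by linarith)] at ha2d
    linear_combination ha2d - c2 * ha1d
  obtain ⟨p, hp, hp1, -, hpb⟩ := exists_isClampedEquilibrium_fst_gt hc1 hc2 h ha1d hl2 h1' h2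
  obtain ⟨q, hq, -, hq2, hqb⟩ :=
    exists_isClampedEquilibrium_fst_gt hc2 hc1 (by linarith [mul_comm c1 c2]) hl2 ha1d h2' h1
  refine ⟨isClampedEquilibrium_of_mem_Icc ha1d hl2 ⟨h1.le, h1'.le⟩ ⟨h2.le, h2'.le⟩, p, q.swap,
    ne_of_apply_ne Prod.fst (hq2.trans hp1).ne', ne_of_apply_ne Prod.fst hp1.ne',
    ne_of_apply_ne Prod.fst hq2.ne, hp.mem_unitSquare, hq.swap.mem_unitSquare,
    hp.1, hp.2, hq.2, hq.1, ?_, ?_⟩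
  · rcases hpb with hb | hb <;> simp [hb]
  · rcases hqb with hb | hb <;> simp [hb]
end
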